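/- arXiv:1812.04260 — 2 statements merged into one kernel-verified Lean document; each statement's English description precedes it below -/
import Mathlib

section
/- Let I ⊆ [0,1] be a set of real numbers satisfying the descending chain condition, and let (c_i)_{i∈ℕ} be a strictly increasing sequence of nonnegative real numbers. Then the set { (m−1+f+k·c_i)/m : i ∈ ℕ, m a positive integer, k a nonnegative integer, f ∈ I_+ } ∩ (−∞,1] satisfies the descending chain condition. -/
open Finset in
/-- `I_+`: sums `∑ nᵢ aᵢ ≤ 1` with `aᵢ ∈ I`, `nᵢ` positive integers, together with `0`. -/
def Iplus (I : Set ℝ) : Set ℝ :=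
  {x : ℝ | x ≤ 1 ∧ ∃ (r : ℕ), 0 < r ∧ ∃ (a : Fin r → ℝ) (n : Fin r → ℕ),
    (∀ i, a i ∈ I) ∧ (∀ i, 0 < n i) ∧ x = ∑ i, (n i : ℝ) * a i} ∪ {0}

/-- `D(I) = {(m-1+f)/m ≤ 1 : m ∈ ℕ₊, f ∈ I_+}`. -/
def Dset (I : Set ℝ) : Set ℝ :=
  {x : ℝ | ∃ (m : ℕ) (f : ℝ), 0 < m ∧ f ∈ Iplus I ∧ x = ((m : ℝ) - 1 + f) / m} ∩ Set.Iic 1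

/-- `D_c(I) = {(m-1+f+kc)/m ≤ 1 : m, k ∈ ℕ₊, f ∈ I_+}`. -/
def Dc (c : ℝ) (I : Set ℝ) : Set ℝ :=
  {x : ℝ | ∃ (m k : ℕ) (f : ℝ), 0 < m ∧ 0 < k ∧ f ∈ Iplus I ∧
    x = ((m : ℝ) - 1 + f + (k : ℝ) * c) / m} ∩ Set.Iic 1

/-- A set of reals satisfies the descending chain condition (DCC) if it contains
no infinite strictly decreasing sequence. -/
def DCC (S : Set ℝ) : Prop := ¬ ∃ f : ℕ → ℝ, (∀ n, f n ∈ S) ∧ StrictAnti f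

lemma nat_no_strictAnti (g : ℕ → ℕ) (h : StrictAnti g) : False := by
  have key : ∀ n, g n + n ≤ g 0 := by
    intro n
    induction n with
    | zero => simp
    | succ n ih => have h2 : g (n + 1) < g n := h (by omega); omega
  have := key (g 0 + 1); omega

lemma exists_const_subseq {K : ℕ} (k : ℕ → ℕ) (hk : ∀ n, k n ≤ K) :
    ∃ (m : ℕ) (φ : ℕ → ℕ), StrictMono φ ∧ ∀ n, k (φ n) = m := by
  obtain ⟨y, hy⟩ :=
    Finite.exists_infinite_fiber (fun n => (⟨k n, Nat.lt_succ_of_le (hk n)⟩ : Fin (K + 1)))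
  rw [Set.infinite_coe_iff] at hy
  have hfreq : ∃ᶠ n in Filter.atTop, k n = y.1 := by
    rw [Nat.frequently_atTop_iff_infinite]
    refine hy.mono ?_
    intro n hn
    simp only [Set.mem_preimage, Set.mem_singleton_iff] at hn
    simpa using congrArg Fin.val hn
  obtain ⟨φ, hφ, hc⟩ := Filter.extraction_of_frequently_atTop hfreq
  exact ⟨y.1, φ, hφ, hc⟩

lemma Iplus_nonneg {I : Set ℝ} (hI : I ⊆ Set.Icc 0 1) {f : ℝ} (hf : f ∈ Iplus I) : 0 ≤ f := by
  rcases hf with ⟨hle, r, hr, a, n, ha, hn, rfl⟩ | h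
  · exact Finset.sum_nonneg fun i _ => mul_nonneg (Nat.cast_nonneg _) (hI (ha i)).1
  · rw [Set.mem_singleton_iff] at h
    simp [h]

lemma Iplus_isWF {I : Set ℝ} (hI : I ⊆ Set.Icc 0 1) (hDCC : DCC I) : (Iplus I).IsWF := by
  have hIwf : I.IsWF := by
    rw [Set.isWF_iff_no_descending_seq]
    intro f hf hmem
    exact hDCC ⟨f, fun n => hmem n, hf⟩
  have hcl : Set.IsPWO (AddSubmonoid.closure I : Set ℝ) :=
    hIwf.isPWO.addSubmonoid_closure (fun x hx => (hI hx).1)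
  refine Set.IsWF.mono hcl.isWF ?_
  rintro x (⟨hle, r, hr, a, n, ha, hn, rfl⟩ | h)
  · simp only [SetLike.mem_coe]
    refine AddSubmonoid.sum_mem (AddSubmonoid.closure I) fun i _ => ?_
    have hrw : ((n i : ℝ)) * a i = n i • a i := (nsmul_eq_mul (n i) (a i)).symm
    rw [hrw]
    exact nsmul_mem (AddSubmonoid.subset_closure (ha i)) _
  · rw [Set.mem_singleton_iff] at h
    subst h
    simp only [SetLike.mem_coe]
    exact zero_mem _

lemma C_isWF (c : ℕ → ℝ) (hc_nonneg : ∀ i, 0 ≤ c i) (hc_mono : StrictMono c) :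
    Set.IsWF ({x : ℝ | ∃ k i : ℕ, x = (k : ℝ) * c i} ∩ Set.Iic 1) := by
  rw [Set.isWF_iff_no_descending_seq]
  intro f hf hmem
  have hmem' : ∀ n : ℕ, f n ∈ ({x : ℝ | ∃ k i : ℕ, x = (k : ℝ) * c i} ∩ Set.Iic 1) :=
    fun n => hmem n
  choose k i hki using fun n => (hmem' n).1
  have hf0 : ∀ n, 0 ≤ f n := fun n =>
    (hki n) ▸ mul_nonneg (Nat.cast_nonneg _) (hc_nonneg _)
  have hfpos : ∀ n, 0 < f n := fun n => lt_of_le_of_lt (hf0 (n + 1)) (hf (Nat.lt_succ_self n))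
  have hcpos : ∀ n, 0 < c (i n) := by
    intro n
    by_contra h
    push_neg at h
    have h2 : f n ≤ 0 := (hki n) ▸ mul_nonpos_of_nonneg_of_nonpos (Nat.cast_nonneg _) h
    linarith [hfpos n]
  have hkpos : ∀ n, 0 < k n := by
    intro n
    rcases Nat.eq_zero_or_pos (k n) with h | h
    · exfalso
      have := hki n
      rw [h] at this
      simp at this
      linarith [hfpos n, this]
    · exact h
  obtain ⟨ε, hε, hεc⟩ : ∃ ε : ℝ, 0 < ε ∧ ∀ n, ε ≤ c (i n) := by
    by_cases h0 : 0 < c 0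
    · exact ⟨c 0, h0, fun n => hc_mono.monotone (Nat.zero_le _)⟩
    · refine ⟨c 1, ?_, ?_⟩
      · have : c 0 = 0 := le_antisymm (not_lt.mp h0) (hc_nonneg 0)
        have := hc_mono (show 0 < 1 by norm_num)
        linarith
      · intro n
        have hn1 : 1 ≤ i n := by
          by_contra hn
          push_neg at hn
          interval_cases h : i n
          · have := hcpos n
            rw [h] at this
            exact h0 this
        exact hc_mono.monotone hn1
  have hk_le : ∀ n, (k n : ℝ) ≤ 1 / ε := by
    intro n
    rw [le_div_iff₀ hε]
    have h1 : (k n : ℝ) * ε ≤ (k n : ℝ) * c (i n) :=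
      mul_le_mul_of_nonneg_left (hεc n) (Nat.cast_nonneg _)
    have h2 : f n ≤ 1 := le_trans (hf.antitone (Nat.zero_le n)) (hmem' 0).2
    rw [← hki n] at h1
    linarith
  have hkK : ∀ n, k n ≤ ⌈1 / ε⌉₊ := by
    intro n
    have := (hk_le n).trans (Nat.le_ceil _)
    exact_mod_cast this
  obtain ⟨k₀, φ, hφ, hkφ⟩ := exists_const_subseq k hkK
  have hk₀ : 0 < k₀ := hkφ 0 ▸ hkpos (φ 0)
  have hanti : StrictAnti fun n => i (φ n) := by
    intro a b hab
    have h1 : f (φ b) < f (φ a) := hf (hφ hab)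
    rw [hki (φ a), hki (φ b), hkφ a, hkφ b] at h1
    have hk0' : (0 : ℝ) < (k₀ : ℝ) := by exact_mod_cast hk₀
    have h2 : c (i (φ b)) < c (i (φ a)) := lt_of_mul_lt_mul_left h1 (le_of_lt hk0')
    exact hc_mono.lt_iff_lt.mp h2
  exact nat_no_strictAnti _ hanti

open Pointwise in
theorem coeff_set_DCC (I : Set ℝ) (hI : I ⊆ Set.Icc 0 1) (hDCC : DCC I)
    (c : ℕ → ℝ) (hc_nonneg : ∀ i, 0 ≤ c i) (hc_mono : StrictMono c) :
    DCC ({x : ℝ | ∃ (i : ℕ) (m k : ℕ) (f : ℝ), 0 < m ∧ f ∈ Iplus I ∧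
      x = ((m : ℝ) - 1 + f + (k : ℝ) * c i) / m} ∩ Set.Iic 1) := by
  rintro ⟨x, hx, hanti⟩
  choose i m k f hm hfI heq using fun n => (hx n).1
  have hx1 : ∀ n, x n ≤ 1 := fun n => (hx n).2
  have hm' : ∀ n, (0 : ℝ) < (m n : ℝ) := fun n => by exact_mod_cast hm n
  set g : ℕ → ℝ := fun n => f n + (k n : ℝ) * c (i n) with hgdef
  have hgf : ∀ n, 0 ≤ f n := fun n => Iplus_nonneg hI (hfI n)
  have hg0 : ∀ n, 0 ≤ g n := fun n =>
    add_nonneg (hgf n) (mul_nonneg (Nat.cast_nonneg _) (hc_nonneg _))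
  have heq' : ∀ n, x n = ((m n : ℝ) - 1 + g n) / (m n : ℝ) := by
    intro n
    rw [heq n, hgdef]
    ring
  have hg1 : ∀ n, g n ≤ 1 := by
    intro n
    have h1 := hx1 n
    rw [heq' n, div_le_one (hm' n)] at h1
    linarith
  have hkc1 : ∀ n, (k n : ℝ) * c (i n) ≤ 1 := by
    intro n
    have h1 := hg1 n
    have h2 := hgf n
    rw [hgdef] at h1
    simp only at h1
    linarith
  have hx11 : x 1 < 1 := lt_of_lt_of_le (hanti (show (0:ℕ) < 1 by norm_num)) (hx1 0)
  have h1x : (0 : ℝ) < 1 - x 1 := by linarith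
  have hmb : ∀ n, (m (n + 1) : ℝ) ≤ 1 / (1 - x 1) := by
    intro n
    have hxle : x (n + 1) ≤ x 1 := hanti.antitone (Nat.succ_le_succ (Nat.zero_le n))
    have hlow : ((m (n + 1) : ℝ) - 1) / (m (n + 1) : ℝ) ≤ x (n + 1) := by
      rw [heq' (n + 1), div_le_div_iff₀ (hm' (n + 1)) (hm' (n + 1))]
      nlinarith [hg0 (n + 1), hm' (n + 1)]
    have h2 : ((m (n + 1) : ℝ) - 1) ≤ x 1 * (m (n + 1) : ℝ) :=
      (div_le_iff₀ (hm' (n + 1))).mp (hlow.trans hxle)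
    rw [le_div_iff₀ h1x]
    nlinarith
  have hmM : ∀ n, m (n + 1) ≤ ⌈1 / (1 - x 1)⌉₊ := by
    intro n
    have := (hmb n).trans (Nat.le_ceil _)
    exact_mod_cast this
  obtain ⟨m₀, φ, hφ, hmφ⟩ := exists_const_subseq (fun n => m (n + 1)) hmM
  have hm₀ : 0 < m₀ := hmφ 0 ▸ hm (φ 0 + 1)
  have hm₀' : (0 : ℝ) < (m₀ : ℝ) := by exact_mod_cast hm₀
  set y : ℕ → ℝ := fun n => g (φ n + 1) with hydef
  have hyanti : StrictAnti y := by
    intro a b hab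
    have hxy : x (φ b + 1) < x (φ a + 1) := hanti (Nat.succ_lt_succ (hφ hab))
    rw [heq' (φ a + 1), heq' (φ b + 1), hmφ a, hmφ b, div_lt_div_iff₀ hm₀' hm₀'] at hxy
    have : g (φ b + 1) < g (φ a + 1) := by nlinarith
    simpa [hydef] using this
  set A : Set ℝ := Iplus I + ({x : ℝ | ∃ k i : ℕ, x = (k : ℝ) * c i} ∩ Set.Iic 1) with hAdef
  have hA : A.IsWF :=
    ((Iplus_isWF hI hDCC).isPWO.add (C_isWF c hc_nonneg hc_mono).isPWO).isWF
  have hyA : ∀ n, y n ∈ A := by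
    intro n
    refine Set.add_mem_add (hfI (φ n + 1)) ?_
    exact ⟨⟨k (φ n + 1), i (φ n + 1), rfl⟩, hkc1 (φ n + 1)⟩
  exact Set.isWF_iff_no_descending_seq.mp hA y hyanti hyA
end

section
/- Let I ⊆ [0,1] be a set of real numbers satisfying the descending chain condition such that 1 is the only possible accumulation point of I (every accumulation point of I equals 1). Set J := (I ∪ {1})_+. Then J satisfies the descending chain condition, J_+ = J, 1 ∈ J, and 1 is the only possible accumulation point of J. -/
open Set

lemma DCC.of_finite_inter_Iic {S : Set ℝ} {c : ℝ} (hS : S ⊆ Iic c)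
    (hfin : ∀ t < c, (S ∩ Iic t).Finite) : DCC S := by
  rintro ⟨f, hfS, hf⟩
  have hf1 : f 1 < c := (hf zero_lt_one).trans_le (hS (hfS 0))
  refine (hfin _ hf1).not_infinite <| infinite_of_injective_forall_mem
    (f := fun n => f (n + 1)) (fun m n h => by simpa using hf.injective h)
    fun n => ⟨hfS _, hf.antitone (by omega)⟩

lemma eq_of_mem_closure_diff_of_finite_inter_Iic {S : Set ℝ} {c x : ℝ} (hS : S ⊆ Iic c)
    (hfin : ∀ t < c, (S ∩ Iic t).Finite) (hx : x ∈ closure (S \ {x})) : x = c := by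
  have hxc : x ≤ c := closure_minimal (sdiff_subset.trans hS) isClosed_Iic hx
  by_contra hne
  obtain ⟨t, hxt, htc⟩ := exists_between (hxc.lt_of_ne hne)
  have hx' : x ∈ closure (Iio t ∩ (S \ {x})) := isOpen_Iio.inter_closure ⟨hxt, hx⟩
  have hfin' : (Iio t ∩ (S \ {x})).Finite :=
    (hfin t htc).subset fun y hy => ⟨hy.2.1, mem_Iic.2 (mem_Iio.1 hy.1).le⟩
  rw [hfin'.isClosed.closure_eq] at hx'
  exact hx'.2.2 rfl

lemma finite_inter_Iic_of_forall_mem_closure_diff_eq {I : Set ℝ} {c t : ℝ} (hI : I ⊆ Ici 0)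
    (hacc : ∀ x, x ∈ closure (I \ {x}) → x = c) (ht : t < c) : (I ∩ Iic t).Finite := by
  by_contra h
  obtain ⟨x, hxt, hx⟩ := Set.Infinite.exists_accPt_of_subset_isCompact h isCompact_Icc
    fun y hy => (⟨hI hy.1, hy.2⟩ : y ∈ Icc 0 t)
  rw [accPt_principal_iff_clusterPt, ← mem_closure_iff_clusterPt] at hx
  have hxc := hacc x (closure_mono (sdiff_subset_sdiff_left inter_subset_left) hx)
  linarith [hxt.2]

lemma Iplus_eq_closure_inter_Iic (K : Set ℝ) :
    Iplus K = (AddSubmonoid.closure K : Set ℝ) ∩ Iic 1 := by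
  ext x
  constructor
  · rintro (⟨hx1, r, -, a, n, ha, -, rfl⟩ | rfl)
    · refine ⟨sum_mem fun i _ => ?_, hx1⟩
      simpa only [nsmul_eq_mul] using nsmul_mem (AddSubmonoid.subset_closure (ha i)) (n i)
    · exact ⟨zero_mem _, mem_Iic.2 zero_le_one⟩
  · rintro ⟨hx, hx1⟩
    obtain ⟨l, hlK, rfl⟩ := AddSubmonoid.exists_list_of_mem_closure hx
    by_cases h0 : l.sum = 0
    · exact Or.inr h0
    refine Or.inl ⟨hx1, l.length, List.length_pos_iff.mpr fun h => h0 (h ▸ List.sum_nil),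
      fun i => l[i], fun _ => 1, fun i => hlK _ (List.getElem_mem _), fun _ => one_pos, ?_⟩
    simp [Fin.sum_univ_getElem]

lemma Iplus_Iplus (K : Set ℝ) : Iplus (Iplus K) = Iplus K := by
  rw [Iplus_eq_closure_inter_Iic K, Iplus_eq_closure_inter_Iic]
  refine Subset.antisymm (inter_subset_inter_left _ ?_)
    fun x hx => ⟨AddSubmonoid.subset_closure hx, hx.2⟩
  exact AddSubmonoid.closure_le.mpr inter_subset_left

lemma finite_closure_inter_Iic_of_pos {F : Set ℝ} (hF : F.Finite) (hpos : ∀ a ∈ F, 0 < a)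
    (t : ℝ) : ((AddSubmonoid.closure F : Set ℝ) ∩ Iic t).Finite := by
  obtain ⟨δ, hδ, hδF⟩ : ∃ δ > 0, ∀ a ∈ F, δ ≤ a := by
    rcases F.eq_empty_or_nonempty with rfl | hne
    · exact ⟨1, one_pos, by simp⟩
    · obtain ⟨δ, hδF, hmin⟩ := exists_min_image F id hF hne
      exact ⟨δ, hpos δ hδF, hmin⟩
  have := hF.to_subtype
  obtain ⟨N, hN⟩ := exists_nat_ge (t / δ)
  refine ((List.finite_length_le F N).image fun l => (l.map (↑)).sum).subset ?_
  rintro x ⟨hx, hxt⟩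
  obtain ⟨l, hlF, rfl⟩ := AddSubmonoid.exists_list_of_mem_closure hx
  lift l to List F using hlF
  refine ⟨l, ?_, rfl⟩
  have hlen := List.card_nsmul_le_sum (l.map (↑)) δ (by simpa using fun a ha _ => hδF a ha)
  rw [List.length_map, nsmul_eq_mul] at hlen
  have hlenN : (l.length : ℝ) ≤ N :=
    calc (l.length : ℝ) ≤ t / δ := by rw [le_div_iff₀ hδ]; exact hlen.trans hxt
      _ ≤ N := hN
  exact_mod_cast hlenN

lemma finite_closure_inter_Iic {K : Set ℝ} (hK : K ⊆ Ici 0) {t : ℝ}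
    (hKt : (K ∩ Iic t).Finite) : ((AddSubmonoid.closure K : Set ℝ) ∩ Iic t).Finite := by
  refine (finite_closure_inter_Iic_of_pos (hKt.sdiff (t := {0}))
    (fun a ha => lt_of_le_of_ne' (hK ha.1.1) ha.2) t).subset ?_
  rintro x ⟨hx, hxt⟩
  refine ⟨?_, hxt⟩
  rw [SetLike.mem_coe, AddSubmonoid.closure_sdiff_singleton_zero]
  obtain ⟨l, hlK, rfl⟩ := AddSubmonoid.exists_list_of_mem_closure hx
  exact list_sum_mem fun a ha => AddSubmonoid.subset_closure
    ⟨hlK a ha, (List.single_le_sum (fun b hb => hK (hlK b hb)) a ha).trans hxt⟩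

theorem enlarge_coefficient_set_general (I : Set ℝ) (hI : I ⊆ Set.Icc 0 1)
    (hacc : ∀ x : ℝ, x ∈ closure (I \ {x}) → x = 1) :
    DCC (Iplus (I ∪ {1})) ∧ Iplus (Iplus (I ∪ {1})) = Iplus (I ∪ {1}) ∧
      (1 : ℝ) ∈ Iplus (I ∪ {1}) ∧
      ∀ x : ℝ, x ∈ closure (Iplus (I ∪ {1}) \ {x}) → x = 1 := by
  have hK : I ∪ {1} ⊆ Ici 0 := union_subset (fun a ha => (hI ha).1) (by simp)
  have hJ : Iplus (I ∪ {1}) ⊆ Iic 1 := by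
    rw [Iplus_eq_closure_inter_Iic]; exact inter_subset_right
  have hfin (t : ℝ) (ht : t < 1) : (Iplus (I ∪ {1}) ∩ Iic t).Finite := by
    rw [Iplus_eq_closure_inter_Iic]
    refine (finite_closure_inter_Iic hK ?_).subset (inter_subset_inter_left _ inter_subset_left)
    rw [union_inter_distrib_right]
    exact (finite_inter_Iic_of_forall_mem_closure_diff_eq (fun a ha => (hI ha).1) hacc ht).union
      ((finite_singleton 1).inter_of_left _)
  refine ⟨DCC.of_finite_inter_Iic hJ hfin, Iplus_Iplus _, ?_,
    fun x hx => eq_of_mem_closure_diff_of_finite_inter_Iic hJ hfin hx⟩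
  rw [Iplus_eq_closure_inter_Iic]
  exact ⟨AddSubmonoid.subset_closure (Or.inr rfl), mem_Iic.2 le_rfl⟩

theorem enlarge_coefficient_set (I : Set ℝ) (hI : I ⊆ Set.Icc 0 1) (hDCC : DCC I)
    (hacc : ∀ x : ℝ, x ∈ closure (I \ {x}) → x = 1) :
    DCC (Iplus (I ∪ {1})) ∧ Iplus (Iplus (I ∪ {1})) = Iplus (I ∪ {1}) ∧
      (1 : ℝ) ∈ Iplus (I ∪ {1}) ∧
      ∀ x : ℝ, x ∈ closure (Iplus (I ∪ {1}) \ {x}) → x = 1 :=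
  enlarge_coefficient_set_general I hI hacc
end
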